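/- (Telescoped regret bound) Under the hypotheses of the single-step descent bound applied at each t = 1,…,T with iterates θ_t^j whose averages satisfy θ̄_{t+1} = θ̄_t - η ḡ_t where ḡ_t = (1/J)∑_j ∇L_t(θ_t^j), and each L_t convex with gradient bounded by L₀: ∑_{t=1}^T ∑_{j=1}^J (L_t(θ_t^j) - L_t(θ)) ≤ (η/2) J T L₀² + J (‖θ̄_1 - θ‖² - ‖θ̄_{T+1} - θ‖²)/(2η) + L₀ ∑_{t=1}^T ∑_{j=1}^J ‖θ_t^j - θ̄_t‖. -/

import Mathlib

open Finset
open scoped RealInnerProductSpace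

/-!
Per round, convexity gives `L(θʲ) - L(θ) ≤ ⟪∇L(θʲ), θʲ - θ⟫`; splitting `θʲ - θ = (θ̄ - θ) + (θʲ - θ̄)`
and bounding the second pairing by `L₀ ‖θʲ - θ̄‖` leaves `J ⟪ḡ, θ̄ - θ⟫`. Expanding
`‖θ̄ - η ḡ - θ‖²` turns this into `(‖θ̄ - θ‖² - ‖θ̄' - θ‖²) / (2η) + (η/2) ‖ḡ‖²`, and `‖ḡ‖ ≤ L₀`.
Summing over the rounds, the squared distances telescope.
-/

variable {E : Type*} [NormedAddCommGroup E]

section NormedSpace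

variable [NormedSpace ℝ E]

theorem ConvexOn.le_sub_of_hasFDerivAt {f : E → ℝ} {f' : E →L[ℝ] ℝ} {x : E}
    (hf : ConvexOn ℝ Set.univ f) (hx : HasFDerivAt f f' x) (y : E) :
    f' (y - x) ≤ f y - f x := by
  have hline : ConvexOn ℝ Set.univ (f ∘ AffineMap.lineMap (k := ℝ) x y) := by
    simpa using hf.comp_affineMap (AffineMap.lineMap (k := ℝ) x y)
  have hderiv : HasDerivAt (f ∘ AffineMap.lineMap (k := ℝ) x y) (f' (y - x)) 0 :=
    hx.comp_hasDerivAt_of_eq 0 AffineMap.hasDerivAt_lineMap (AffineMap.lineMap_apply_zero x y).symm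
  simpa [slope_def_field] using
    hline.le_slope_of_hasDerivAt (Set.mem_univ 0) (Set.mem_univ 1) one_pos hderiv

theorem norm_inv_card_smul_sum_le {ι : Type*} {s : Finset ι} (hs : s.Nonempty) {v : ι → E}
    {C : ℝ} (hv : ∀ i ∈ s, ‖v i‖ ≤ C) :
    ‖(#s : ℝ)⁻¹ • ∑ i ∈ s, v i‖ ≤ C := by
  have hcard : (0 : ℝ) < #s := by exact_mod_cast hs.card_pos
  rw [norm_smul, norm_inv, Real.norm_natCast, inv_mul_le_iff₀ hcard]
  calc ‖∑ i ∈ s, v i‖ ≤ ∑ i ∈ s, ‖v i‖ := norm_sum_le _ _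
    _ ≤ ∑ _i ∈ s, C := sum_le_sum hv
    _ = #s * C := by rw [sum_const, nsmul_eq_mul]

end NormedSpace

variable [InnerProductSpace ℝ E]

theorem real_inner_eq_norm_sq_sub_norm_sub_smul_sq {η : ℝ} (hη : η ≠ 0) (g a : E) :
    ⟪g, a⟫ = (‖a‖ ^ 2 - ‖a - η • g‖ ^ 2) / (2 * η) + η / 2 * ‖g‖ ^ 2 := by
  rw [norm_sub_sq_real, real_inner_smul_right, norm_smul, Real.norm_eq_abs, mul_pow, sq_abs,
    real_inner_comm]
  field_simp
  ring

section CompleteSpace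

variable [CompleteSpace E]

theorem ConvexOn.inner_gradient_le_sub {f : E → ℝ} {x : E} (hf : ConvexOn ℝ Set.univ f)
    (hx : DifferentiableAt ℝ f x) (y : E) :
    ⟪gradient f x, y - x⟫ ≤ f y - f x := by
  simpa using hf.le_sub_of_hasFDerivAt (hasGradientAt_iff_hasFDerivAt.mp hx.hasGradientAt) y

theorem ConvexOn.sub_le_inner_gradient_add {f : E → ℝ} {x : E} {L₀ : ℝ}
    (hf : ConvexOn ℝ Set.univ f) (hx : DifferentiableAt ℝ f x) (hgrad : ‖gradient f x‖ ≤ L₀)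
    (b θ : E) :
    f x - f θ ≤ ⟪gradient f x, b - θ⟫ + L₀ * ‖x - b‖ := by
  have hsplit : ⟪gradient f x, x - θ⟫ = ⟪gradient f x, b - θ⟫ + ⟪gradient f x, x - b⟫ := by
    rw [← inner_add_right, sub_add_sub_cancel']
  have hconv := hf.inner_gradient_le_sub hx θ
  rw [← neg_sub, inner_neg_right] at hconv
  have hcs : ⟪gradient f x, x - b⟫ ≤ L₀ * ‖x - b‖ :=
    (real_inner_le_norm _ _).trans (mul_le_mul_of_nonneg_right hgrad (norm_nonneg _))
  linarith

theorem ConvexOn.sum_sub_le_of_averaged_step {J : ℕ} (hJ : 0 < J) {f : E → ℝ}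
    (hf : ConvexOn ℝ Set.univ f) (hdiff : Differentiable ℝ f)
    {L₀ : ℝ} (hgrad : ∀ x, ‖gradient f x‖ ≤ L₀) {η : ℝ} (hη : 0 < η)
    (x : Fin J → E) (b b' θ : E) (hstep : b' = b - η • ((J : ℝ)⁻¹ • ∑ j, gradient f (x j))) :
    ∑ j, (f (x j) - f θ) ≤
      (η / 2) * J * L₀ ^ 2 + J * ((‖b - θ‖ ^ 2 - ‖b' - θ‖ ^ 2) / (2 * η))
        + L₀ * ∑ j, ‖x j - b‖ := by
  set g := (J : ℝ)⁻¹ • ∑ j, gradient f (x j)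
  have hJ' : (J : ℝ) ≠ 0 := by positivity
  have hg : ‖g‖ ≤ L₀ := by
    simpa using norm_inv_card_smul_sum_le (univ_nonempty_iff.mpr ⟨⟨0, hJ⟩⟩)
      (fun j _ => hgrad (x j))
  have hsum : ∑ j, ⟪gradient f (x j), b - θ⟫ = J * ⟪g, b - θ⟫ := by
    rw [← sum_inner, real_inner_smul_left, mul_inv_cancel_left₀ hJ']
  have hdescent : ⟪g, b - θ⟫ ≤ (‖b - θ‖ ^ 2 - ‖b' - θ‖ ^ 2) / (2 * η) + η / 2 * L₀ ^ 2 := by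
    rw [real_inner_eq_norm_sq_sub_norm_sub_smul_sq hη.ne' g, hstep, sub_right_comm]
    gcongr
  calc ∑ j, (f (x j) - f θ)
      ≤ ∑ j, (⟪gradient f (x j), b - θ⟫ + L₀ * ‖x j - b‖) :=
        sum_le_sum fun j _ => hf.sub_le_inner_gradient_add (hdiff _) (hgrad _) b θ
    _ = J * ⟪g, b - θ⟫ + L₀ * ∑ j, ‖x j - b‖ := by rw [sum_add_distrib, hsum, mul_sum]
    _ ≤ J * ((‖b - θ‖ ^ 2 - ‖b' - θ‖ ^ 2) / (2 * η) + η / 2 * L₀ ^ 2)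
          + L₀ * ∑ j, ‖x j - b‖ := by gcongr
    _ = _ := by ring

end CompleteSpace

theorem stmt_7_general (n J T : ℕ) (hJ : 0 < J)
    (L : ℕ → EuclideanSpace ℝ (Fin n) → ℝ)
    (hconv : ∀ t, ConvexOn ℝ Set.univ (L t)) (hdiff : ∀ t, Differentiable ℝ (L t))
    (L₀ : ℝ) (hgrad : ∀ t θ, ‖gradient (L t) θ‖ ≤ L₀)
    (η : ℝ) (hη : 0 < η)
    (θv : ℕ → Fin J → EuclideanSpace ℝ (Fin n))
    (θbar : ℕ → EuclideanSpace ℝ (Fin n))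
    (hstep : ∀ t, θbar (t + 1) =
      θbar t - η • ((J : ℝ)⁻¹ • ∑ j, gradient (L t) (θv t j)))
    (θ : EuclideanSpace ℝ (Fin n)) :
    ∑ t ∈ range T, ∑ j, (L t (θv t j) - L t θ) ≤
      (η / 2) * J * T * L₀ ^ 2
        + J * ((‖θbar 0 - θ‖ ^ 2 - ‖θbar T - θ‖ ^ 2) / (2 * η))
        + L₀ * ∑ t ∈ range T, ∑ j, ‖θv t j - θbar t‖ := by
  have htelescope := sum_range_sub' (fun t => ‖θbar t - θ‖ ^ 2) T
  calc ∑ t ∈ range T, ∑ j, (L t (θv t j) - L t θ)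
      ≤ ∑ t ∈ range T, ((η / 2) * J * L₀ ^ 2
          + J * ((‖θbar t - θ‖ ^ 2 - ‖θbar (t + 1) - θ‖ ^ 2) / (2 * η))
          + L₀ * ∑ j, ‖θv t j - θbar t‖) :=
        sum_le_sum fun t _ => (hconv t).sum_sub_le_of_averaged_step hJ (hdiff t) (hgrad t) hη
          (θv t) (θbar t) (θbar (t + 1)) θ (hstep t)
    _ = _ := by
        simp only [sum_add_distrib, sum_const, card_range, nsmul_eq_mul, ← mul_sum, ← sum_div,
          htelescope]
        ring

/-- Telescoped regret bound, equation (25) of the paper. -/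
theorem stmt_7 (n J T : ℕ) (hJ : 0 < J) (hT : 0 < T)
    (L : ℕ → EuclideanSpace ℝ (Fin n) → ℝ)
    (hconv : ∀ t, ConvexOn ℝ Set.univ (L t)) (hdiff : ∀ t, Differentiable ℝ (L t))
    (L₀ : ℝ) (hgrad : ∀ t θ, ‖gradient (L t) θ‖ ≤ L₀)
    (η : ℝ) (hη : 0 < η)
    (θv : ℕ → Fin J → EuclideanSpace ℝ (Fin n))
    (θbar : ℕ → EuclideanSpace ℝ (Fin n))
    (hθbar : ∀ t, θbar t = (J : ℝ)⁻¹ • ∑ j, θv t j)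
    (hstep : ∀ t, θbar (t + 1) =
      θbar t - η • ((J : ℝ)⁻¹ • ∑ j, gradient (L t) (θv t j)))
    (θ : EuclideanSpace ℝ (Fin n)) :
    ∑ t ∈ range T, ∑ j, (L t (θv t j) - L t θ) ≤
      (η / 2) * J * T * L₀ ^ 2
        + J * ((‖θbar 0 - θ‖ ^ 2 - ‖θbar T - θ‖ ^ 2) / (2 * η))
        + L₀ * ∑ t ∈ range T, ∑ j, ‖θv t j - θbar t‖ :=
  stmt_7_general n J T hJ L hconv hdiff L₀ hgrad η hη θv θbar hstep θ
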